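/- Let G be a group, μ a unitary character of G, δ > 0, and f, g : G → ℂ satisfying |f(xy) + μ(y) f(xy⁻¹) - 2 f(x) g(y)| ≤ δ for all x, y ∈ G. If g is unbounded, then (f, g) satisfies the μ-Wilson equation f(xy) + μ(y) f(xy⁻¹) = 2 f(x) g(y) exactly for all x, y ∈ G. -/

import Mathlib

/-!
Write `E(x, y) = f(xy) + μ(y) f(xy⁻¹) - 2 f(x) g(y)`, so `‖E‖ ≤ δ`. Expanding `E` at the nine
points `(uz, y⁻¹), (uz⁻¹, y⁻¹), (u, z), (u, zy), (u, z⁻¹y), (uy, z), (uy⁻¹, z), (u, yz), (u, yz⁻¹)`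
gives an identity `f(u) D(y, z) + 2 g(z) E(u, y) = Σ cᵢ E(·, ·)`, where `D` is built from `g` and
`μ` alone and the coefficients `cᵢ` are bounded independently of `u` and `z`. A bounded multiple
of an unbounded function vanishes; applied three times this shows: if `f` is bounded then
`f = 0`; otherwise `D = 0`, so `2 g(z) E(x, y)` is bounded in `z` and hence `E(x, y) = 0`.
-/

theorem eq_zero_of_forall_norm_mul_le {α 𝕜 : Type*} [NormedDivisionRing 𝕜] {h : α → 𝕜}
    (hh : ¬ ∃ C : ℝ, ∀ x, ‖h x‖ ≤ C) {c : 𝕜} {M : ℝ} (hM : ∀ x, ‖c * h x‖ ≤ M) : c = 0 := by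
  by_contra hc
  refine hh ⟨M / ‖c‖, fun x => ?_⟩
  rw [le_div_iff₀ (norm_pos_iff.2 hc), mul_comm, ← norm_mul]
  exact hM x

namespace MuWilson

variable {G : Type*} [Group G] {μ f g : G → ℂ} {δ : ℝ}

def defect (μ f g : G → ℂ) (x y : G) : ℂ :=
  f (x * y) + μ y * f (x * y⁻¹) - 2 * f x * g y

def gDefect (μ g : G → ℂ) (y z : G) : ℂ :=
  4 * g y * g z - 2 * g (y * z) - 2 * μ z * g (y * z⁻¹)
    - 2 * g (z * y) - 2 * μ z * g (z⁻¹ * y) + 4 * μ y * g y⁻¹ * g z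

theorem mul_gDefect_add_eq (hμ : ∀ x y, μ (x * y) = μ x * μ y) (hμ0 : ∀ x, μ x ≠ 0)
    (u y z : G) :
    f u * gDefect μ g y z + 2 * g z * defect μ f g u y =
      -μ y * defect μ f g (u * z) y⁻¹ - μ y * μ z * defect μ f g (u * z⁻¹) y⁻¹
      - 2 * μ y * g y⁻¹ * defect μ f g u z
      + defect μ f g u (z * y) + μ z * defect μ f g u (z⁻¹ * y)
      - defect μ f g (u * y) z - μ y * defect μ f g (u * y⁻¹) z
      + defect μ f g u (y * z) + μ z * defect μ f g u (y * z⁻¹) := by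
  have hμinv : ∀ x, μ x⁻¹ = (μ x)⁻¹ := fun x =>
    eq_inv_of_mul_eq_one_right <| by
      rw [← hμ, mul_inv_cancel]
      exact mul_left_cancel₀ (hμ0 1) (by rw [← hμ, mul_one, mul_one])
  simp only [defect, gDefect, mul_inv_rev, inv_inv, mul_assoc, hμ, hμinv]
  field_simp [hμ0 y, hμ0 z]
  ring

theorem norm_mul_gDefect_add_le (hμ : ∀ x y, μ (x * y) = μ x * μ y) (hμ1 : ∀ x, ‖μ x‖ = 1)
    (hE : ∀ x y, ‖defect μ f g x y‖ ≤ δ) (u y z : G) :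
    ‖f u * gDefect μ g y z + 2 * g z * defect μ f g u y‖ ≤ (8 + 2 * ‖g y⁻¹‖) * δ := by
  have hcE : ∀ c x y, ‖c * defect μ f g x y‖ ≤ ‖c‖ * δ := fun c x y => by
    rw [norm_mul]
    exact mul_le_mul_of_nonneg_left (hE x y) (norm_nonneg c)
  rw [mul_gDefect_add_eq hμ (fun x => norm_ne_zero_iff.1 (by simp [hμ1]))]
  calc _ ≤ ‖-μ y‖ * δ + ‖μ y * μ z‖ * δ + ‖2 * μ y * g y⁻¹‖ * δ + δ + ‖μ z‖ * δ + δ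
        + ‖μ y‖ * δ + δ + ‖μ z‖ * δ := by
        repeat first
          | apply norm_add_le_of_le | apply norm_sub_le_of_le | apply hcE | apply hE
    _ = (8 + 2 * ‖g y⁻¹‖) * δ := by
        simp only [norm_neg, norm_mul, hμ1, Complex.norm_two]
        ring

theorem apply_eq_zero_of_bounded (hμ1 : ∀ x, ‖μ x‖ = 1) (hE : ∀ x y, ‖defect μ f g x y‖ ≤ δ)
    (hg : ¬ ∃ C : ℝ, ∀ x, ‖g x‖ ≤ C) (hf : ∃ C : ℝ, ∀ x, ‖f x‖ ≤ C) (u : G) : f u = 0 := by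
  obtain ⟨C, hC⟩ := hf
  suffices 2 * f u = 0 by simpa using this
  refine eq_zero_of_forall_norm_mul_le hg (M := C + C + δ) fun v => ?_
  calc ‖2 * f u * g v‖ = ‖f (u * v) + μ v * f (u * v⁻¹) - defect μ f g u v‖ := by
        rw [defect, sub_sub_cancel]
    _ ≤ C + C + δ := by
        refine norm_sub_le_of_le (norm_add_le_of_le (hC _) ?_) (hE u v)
        rw [norm_mul, hμ1, one_mul]
        exact hC _

theorem gDefect_eq_zero (hμ : ∀ x y, μ (x * y) = μ x * μ y) (hμ1 : ∀ x, ‖μ x‖ = 1)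
    (hE : ∀ x y, ‖defect μ f g x y‖ ≤ δ) (hf : ¬ ∃ C : ℝ, ∀ x, ‖f x‖ ≤ C) (y z : G) :
    gDefect μ g y z = 0 := by
  refine eq_zero_of_forall_norm_mul_le hf (M := (8 + 2 * ‖g y⁻¹‖) * δ + ‖2 * g z‖ * δ)
    fun u => ?_
  calc ‖gDefect μ g y z * f u‖
      = ‖(f u * gDefect μ g y z + 2 * g z * defect μ f g u y) - 2 * g z * defect μ f g u y‖ := by
        rw [add_sub_cancel_right, mul_comm]
    _ ≤ (8 + 2 * ‖g y⁻¹‖) * δ + ‖2 * g z‖ * δ := by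
        refine norm_sub_le_of_le (norm_mul_gDefect_add_le hμ hμ1 hE u y z) ?_
        rw [norm_mul]
        exact mul_le_mul_of_nonneg_left (hE u y) (norm_nonneg _)

theorem defect_eq_zero (hμ : ∀ x y, μ (x * y) = μ x * μ y) (hμ1 : ∀ x, ‖μ x‖ = 1)
    (hE : ∀ x y, ‖defect μ f g x y‖ ≤ δ) (hf : ¬ ∃ C : ℝ, ∀ x, ‖f x‖ ≤ C)
    (hg : ¬ ∃ C : ℝ, ∀ x, ‖g x‖ ≤ C) (x y : G) : defect μ f g x y = 0 := by
  suffices 2 * defect μ f g x y = 0 by simpa using this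
  refine eq_zero_of_forall_norm_mul_le hg (M := (8 + 2 * ‖g y⁻¹‖) * δ) fun z => ?_
  have h := norm_mul_gDefect_add_le hμ hμ1 hE x y z
  rwa [gDefect_eq_zero hμ hμ1 hE hf, mul_zero, zero_add, mul_right_comm] at h

end MuWilson

theorem stmt_15_general {G : Type*} [Group G] (μ f g : G → ℂ) (δ : ℝ)
    (hμ : ∀ x y, μ (x * y) = μ x * μ y) (hμ1 : ∀ x, ‖μ x‖ = 1)
    (hfg : ∀ x y, ‖f (x * y) + μ y * f (x * y⁻¹) - 2 * f x * g y‖ ≤ δ)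
    (hg : ¬ ∃ C : ℝ, ∀ x, ‖g x‖ ≤ C) :
    ∀ x y, f (x * y) + μ y * f (x * y⁻¹) = 2 * f x * g y := by
  intro x y
  rw [← sub_eq_zero]
  by_cases hf : ∃ C : ℝ, ∀ u, ‖f u‖ ≤ C
  · simp [MuWilson.apply_eq_zero_of_bounded hμ1 hfg hg hf]
  · exact MuWilson.defect_eq_zero hμ hμ1 hfg hf hg x y

theorem stmt_15 {G : Type*} [Group G] (μ f g : G → ℂ) (δ : ℝ) (hδ : 0 < δ)
    (hμ : ∀ x y, μ (x * y) = μ x * μ y) (hμ1 : ∀ x, ‖μ x‖ = 1)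
    (hfg : ∀ x y, ‖f (x * y) + μ y * f (x * y⁻¹) - 2 * f x * g y‖ ≤ δ)
    (hg : ¬ ∃ C : ℝ, ∀ x, ‖g x‖ ≤ C) :
    ∀ x y, f (x * y) + μ y * f (x * y⁻¹) = 2 * f x * g y :=
  stmt_15_general μ f g δ hμ hμ1 hfg hg
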